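/- Let R be a commutative ring, M an Rℤⁿ-module, and L ⊆ Z̄ⁿ a finite join-sublattice (i.e. closed under joins of finite subsets, including containing (−∞,…,−∞) as the empty join if required; here L = L̂). Then L is M-admissible in the sense of Perling — i.e. M̄ ≅ unzip_L zip_L M — if and only if M̄ is L-determined, i.e. supp(M̄) ⊆ ↑L and for all c ≤ d in Z̄ⁿ with L ∩ ↓c = L ∩ ↓d, the map M̄(c ≤ d) is an isomorphism. -/

import Mathlib

open Finset CategoryTheory

attribute [local instance 2000] Preorder.smallCategory

set_option linter.unusedSectionVars false
set_option synthInstance.maxHeartbeats 1000000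
set_option maxHeartbeats 1000000

/-- The inclusion `ℤⁿ → Z̄ⁿ = (ℤ ∪ {−∞})ⁿ`. -/
def embZ {n : ℕ} (d : Fin n → ℤ) : Fin n → WithBot ℤ := fun i => (d i : WithBot ℤ)

lemma embZ_mono {n : ℕ} : Monotone (embZ (n := n)) :=
  fun _ _ h i => WithBot.coe_le_coe.mpr (h i)

/-- `Mbar` is the canonical extension of `M` to `Z̄ⁿ`: it restricts to `M` on `ℤⁿ`, and
at every `c ∈ Z̄ⁿ` it is the limit `lim_{d ≥ c, d ∈ ℤⁿ} M(d)`, expressed elementwise. -/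
def IsExtension {n : ℕ} {R : Type} [CommRing R] (M : (Fin n → ℤ) ⥤ ModuleCat R)
    (Mbar : (Fin n → WithBot ℤ) ⥤ ModuleCat R) : Prop :=
  (embZ_mono.functor ⋙ Mbar = M) ∧
  ∀ c : Fin n → WithBot ℤ,
    (∀ x y : Mbar.obj c,
      (∀ (d : Fin n → ℤ) (h : c ≤ embZ d),
        Mbar.map (homOfLE h) x = Mbar.map (homOfLE h) y) → x = y) ∧
    (∀ f : ∀ d : Fin n → ℤ, c ≤ embZ d → Mbar.obj (embZ d),
      (∀ (d e : Fin n → ℤ) (hd : c ≤ embZ d) (he : c ≤ embZ e) (hde : d ≤ e),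
        Mbar.map (homOfLE (embZ_mono hde)) (f d hd) = f e he) →
      ∃ x : Mbar.obj c, ∀ (d : Fin n → ℤ) (h : c ≤ embZ d), Mbar.map (homOfLE h) x = f d h)

/-- `M` is `S`-determined: the support of `M` is contained in the upset generated by `S`,
and whenever `c ≤ d` with `S ∩ ↓c = S ∩ ↓d`, the structure map `M(c ≤ d)` is an isomorphism. -/
def SDet {C : Type*} [Preorder C] {R : Type} [CommRing R] (S : Set C) (M : C ⥤ ModuleCat R) :
    Prop :=
  (∀ c : C, (∃ x : M.obj c, x ≠ 0) → ∃ s ∈ S, s ≤ c) ∧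
  ∀ (c d : C) (h : c ≤ d),
    S ∩ {x | x ≤ c} = S ∩ {x | x ≤ d} → IsIso (M.map (homOfLE h))

/-- The convex projection `ℤⁿ → [a,b]`. -/
def proj {n : ℕ} (a b : Fin n → ℤ) (c : Fin n → ℤ) : Fin n → ℤ :=
  fun i => max (a i) (min (c i) (b i))

lemma proj_mono {n : ℕ} (a b : Fin n → ℤ) : Monotone (proj a b) :=
  fun _ _ h i => max_le_max le_rfl (min_le_min (h i) le_rfl)

/-- The interval `[a,b]` of `Z̄ⁿ` with infinitary points added:
in each coordinate either `−∞` or an integer of `[aᵢ, bᵢ]`. -/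
def barIcc {n : ℕ} (a b : Fin n → ℤ) : Set (Fin n → WithBot ℤ) :=
  {c | ∀ i, c i = ⊥ ∨ ((a i : WithBot ℤ) ≤ c i ∧ c i ≤ (b i : WithBot ℤ))}

/-- The representable module `R[Mor(s, −)]`. -/
noncomputable def RepM {C : Type} [Preorder C] (R : Type) [CommRing R] (s : C) :
    C ⥤ ModuleCat R :=
  coyoneda.obj (Opposite.op s) ⋙ ModuleCat.free R

/-- A functor module is finitely presented if it admits a presentation
`K → N → M → 0` by finite direct sums of representables. -/
noncomputable def FinPres {C : Type} [Preorder C] {R : Type} [CommRing R]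
    (M : C ⥤ ModuleCat R) : Prop :=
  ∃ (p q : ℕ) (s : Fin p → C) (t : Fin q → C)
    (f : (∐ fun i => RepM R (s i)) ⟶ M)
    (g : (∐ fun j => RepM R (t j)) ⟶ (∐ fun i => RepM R (s i)))
    (w : g ≫ f = 0), Epi f ∧ Epi (Limits.kernel.lift f g w)

/-- `alphaF L c`: the join of the elements of `L` below `c` (that is, `mub(L ∩ ↓c)` when
`L ∩ ↓c ≠ ∅`, and `⊥` otherwise). -/
noncomputable def alphaF {C : Type*} [SemilatticeSup C] [OrderBot C] (L : Finset C) (c : C) :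
    C :=
  letI := Classical.decPred (fun x : C => x ≤ c)
  (L.filter (fun x => x ≤ c)).sup id

lemma alphaF_le {C : Type*} [SemilatticeSup C] [OrderBot C] (L : Finset C) (c : C) :
    alphaF L c ≤ c := by
  classical
  exact Finset.sup_le fun x hx => (Finset.mem_filter.mp hx).2

/-- `L` is `M`-admissible in the sense of Perling: `M̄ ≅ unzip_L zip_L M`, i.e. `M̄`
vanishes where `L ∩ ↓c = ∅` and otherwise the canonical map `M̄(mub(L ∩ ↓c)) → M̄(c)`
is an isomorphism. -/
def Admissible {n : ℕ} {R : Type} [CommRing R] (L : Finset (Fin n → WithBot ℤ))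
    (Mbar : (Fin n → WithBot ℤ) ⥤ ModuleCat R) : Prop :=
  (∀ c : Fin n → WithBot ℤ, ((L : Set (Fin n → WithBot ℤ)) ∩ {x | x ≤ c} = ∅) →
      ∀ x : Mbar.obj c, x = 0) ∧
  (∀ c : Fin n → WithBot ℤ, ((L : Set (Fin n → WithBot ℤ)) ∩ {x | x ≤ c}).Nonempty →
      IsIso (Mbar.map (homOfLE (alphaF_le L c))))

/-!
Both conditions are governed by `α(c) = ⋁ (L ∩ ↓c)`. Since `L ∩ ↓α(c) = L ∩ ↓c`, an
`L`-determined module has `M̄(α(c) ≤ c)` invertible. Conversely, if `c ≤ d` have the same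
`L`-downset then `α(c) = α(d)`, so `M̄(c ≤ d) = M̄(α(c) ≤ d) ∘ M̄(α(c) ≤ c)⁻¹`; when that
downset is empty both ends vanish.
-/

section alphaF

variable {C : Type*} [SemilatticeSup C] [OrderBot C] (L : Finset C)

lemma le_alphaF {c s : C} (hs : s ∈ L) (hsc : s ≤ c) : s ≤ alphaF L c := by
  classical
  exact Finset.le_sup (f := id) (Finset.mem_filter.mpr ⟨hs, hsc⟩)

lemma inter_Iic_alphaF (c : C) :
    (L : Set C) ∩ {x | x ≤ alphaF L c} = (L : Set C) ∩ {x | x ≤ c} := by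
  ext s
  exact ⟨fun ⟨hs, hle⟩ => ⟨hs, hle.trans (alphaF_le L c)⟩,
    fun ⟨hs, hle⟩ => ⟨hs, le_alphaF L hs hle⟩⟩

lemma alphaF_congr {c d : C} (h : (L : Set C) ∩ {x | x ≤ c} = (L : Set C) ∩ {x | x ≤ d}) :
    alphaF L c = alphaF L d := by
  classical
  unfold alphaF
  congr 1
  ext x
  simpa using Set.ext_iff.mp h x

end alphaF

lemma ModuleCat.isIso_of_forall_eq_zero {R : Type} [CommRing R] {A B : ModuleCat R} (f : A ⟶ B)
    (hA : ∀ x : A, x = 0) (hB : ∀ x : B, x = 0) : IsIso f := by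
  refine ⟨0, ?_, ?_⟩
  · ext x; simpa using (hA x).symm
  · ext x; simpa using (hB x).symm

lemma CategoryTheory.Functor.isIso_map_homOfLE_of_eq {C D : Type*} [Preorder C] [Category D]
    (F : C ⥤ D) {a a' c d : C} (hac : a ≤ c) (had : a' ≤ d) (hcd : c ≤ d) (ha : a = a')
    [IsIso (F.map (homOfLE hac))] [IsIso (F.map (homOfLE had))] :
    IsIso (F.map (homOfLE hcd)) := by
  subst ha
  have hcomp : F.map (homOfLE hac) ≫ F.map (homOfLE hcd) = F.map (homOfLE had) := by
    rw [← F.map_comp]; rfl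
  have : IsIso (F.map (homOfLE hac) ≫ F.map (homOfLE hcd)) := hcomp ▸ inferInstance
  exact IsIso.of_isIso_comp_left (F.map (homOfLE hac)) _

section

variable {n : ℕ} {R : Type} [CommRing R] {L : Finset (Fin n → WithBot ℤ)}
  {N : (Fin n → WithBot ℤ) ⥤ ModuleCat R}

lemma Admissible.sDet (h : Admissible L N) : SDet (L : Set (Fin n → WithBot ℤ)) N := by
  obtain ⟨hzero, hiso⟩ := h
  refine ⟨fun c ⟨x, hx⟩ => ?_, fun c d hcd hLcd => ?_⟩
  · by_contra! hnone
    exact hx (hzero c (Set.eq_empty_of_forall_notMem fun s ⟨hs, hsc⟩ => hnone s hs hsc) x)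
  · rcases Set.eq_empty_or_nonempty ((L : Set (Fin n → WithBot ℤ)) ∩ {x | x ≤ c}) with he | hne
    · exact ModuleCat.isIso_of_forall_eq_zero _ (hzero c he) (hzero d (hLcd ▸ he))
    · have := hiso c hne
      have := hiso d (hLcd ▸ hne)
      exact N.isIso_map_homOfLE_of_eq (alphaF_le L c) (alphaF_le L d) hcd (alphaF_congr L hLcd)

lemma SDet.admissible (h : SDet (L : Set (Fin n → WithBot ℤ)) N) : Admissible L N := by
  obtain ⟨hsupp, hiso⟩ := h
  refine ⟨fun c hempty x => ?_, fun c _ => hiso _ _ _ (inter_Iic_alphaF L c)⟩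
  by_contra hx
  obtain ⟨s, hs, hsc⟩ := hsupp c ⟨x, hx⟩
  exact (Set.eq_empty_iff_forall_notMem.mp hempty) s ⟨hs, hsc⟩

end

theorem stmt16_general (n : ℕ) (R : Type) [CommRing R]
    (Mbar : (Fin n → WithBot ℤ) ⥤ ModuleCat R)
    (L : Finset (Fin n → WithBot ℤ)) :
    Admissible L Mbar ↔ SDet (↑L : Set (Fin n → WithBot ℤ)) Mbar :=
  ⟨Admissible.sDet, SDet.admissible⟩

theorem stmt16 (n : ℕ) (R : Type) [CommRing R]
    (M : (Fin n → ℤ) ⥤ ModuleCat R) (Mbar : (Fin n → WithBot ℤ) ⥤ ModuleCat R)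
    (hext : IsExtension M Mbar)
    (L : Finset (Fin n → WithBot ℤ))
    (hL : ∀ (T : Finset (Fin n → WithBot ℤ)) (hT : T.Nonempty), T ⊆ L → T.sup' hT id ∈ L) :
    Admissible L Mbar ↔ SDet (↑L : Set (Fin n → WithBot ℤ)) Mbar :=
  stmt16_general n R Mbar L
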